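/- arXiv:1712.03577 — 4 statements merged into one kernel-verified Lean document; each statement's English description precedes it below -/
import Mathlib

section
/- If f : ℝⁿ → ℝ is μ-strongly convex and differentiable with L-Lipschitz gradient, then for all x, y: ⟨∇f(x) − ∇f(y), x − y⟩ ≥ (1/(L+μ))‖∇f(x) − ∇f(y)‖² + (Lμ/(L+μ))‖x − y‖². -/
/-!
Put `g x = f x - μ / 2 * ‖x‖ ^ 2`, with gradient `∇g = ∇f - μ • id`. Strong convexity of `f` says
that the Bregman divergence of `g` is nonnegative, and the descent lemma for `f` bounds it by
`(L - μ) / 2 * ‖y - x‖ ^ 2`. Comparing `x` and `y` through the point `y - t • (∇g y - ∇g x)` then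
gives, for every `t`, `(2t - (L - μ) t²) ‖∇g x - ∇g y‖² ≤ ⟪∇g x - ∇g y, x - y⟫`, hence the
cocoercivity `‖∇g x - ∇g y‖² ≤ (L - μ) ⟪∇g x - ∇g y, x - y⟫`. Expanding `∇g` turns this into
`‖∇f x - ∇f y‖² + L μ ‖x - y‖² ≤ (L + μ) ⟪∇f x - ∇f y, x - y⟫`.
-/

open InnerProductSpace

section Bregman

variable {E : Type*} [NormedAddCommGroup E] [InnerProductSpace ℝ E]

def bregmanDiv (f : E → ℝ) (f' : E → E) (a b : E) : ℝ :=
  f b - f a - ⟪f' a, b - a⟫_ℝ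

theorem bregmanDiv_add_bregmanDiv (f : E → ℝ) (f' : E → E) (a b c : E) :
    bregmanDiv f f' a c + bregmanDiv f f' c b = bregmanDiv f f' a b + ⟪f' a - f' c, b - c⟫_ℝ := by
  simp only [bregmanDiv, inner_sub_left, inner_sub_right]
  ring

theorem bregmanDiv_add_bregmanDiv_swap (f : E → ℝ) (f' : E → E) (a b : E) :
    bregmanDiv f f' a b + bregmanDiv f f' b a = ⟪f' a - f' b, a - b⟫_ℝ := by
  simpa [bregmanDiv] using bregmanDiv_add_bregmanDiv f f' a a b

theorem bregmanDiv_sub_mul_norm_sq (f : E → ℝ) (f' : E → E) (μ : ℝ) (a b : E) :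
    bregmanDiv (fun z ↦ f z - μ / 2 * ‖z‖ ^ 2) (fun z ↦ f' z - μ • z) a b =
      bregmanDiv f f' a b - μ / 2 * ‖b - a‖ ^ 2 := by
  have hb : ‖b‖ ^ 2 = ‖a‖ ^ 2 + 2 * ⟪a, b - a⟫_ℝ + ‖b - a‖ ^ 2 := by
    simpa using norm_add_sq_real a (b - a)
  simp only [bregmanDiv, inner_sub_left, real_inner_smul_left, hb]
  ring

theorem le_mul_of_forall_quadratic_le {a C D : ℝ} (ha : 0 ≤ a) (hC : 0 ≤ C)
    (h : ∀ t, (2 * t - C * t ^ 2) * a ≤ D) : a ≤ C * D := by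
  rcases hC.eq_or_lt with rfl | hC
  · rcases ha.eq_or_lt with rfl | ha
    · simp
    have := h ((D + 1) / (2 * a))
    field_simp at this
    linarith
  · have := h C⁻¹
    field_simp at this
    linarith

theorem mul_norm_sq_le_bregmanDiv {C : ℝ} {g : E → ℝ} {g' : E → E}
    (hconv : ∀ a b, 0 ≤ bregmanDiv g g' a b)
    (hsmooth : ∀ a b, bregmanDiv g g' a b ≤ C / 2 * ‖b - a‖ ^ 2) (a c : E) (t : ℝ) :
    (t - C / 2 * t ^ 2) * ‖g' c - g' a‖ ^ 2 ≤ bregmanDiv g g' a c := by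
  set b := c - t • (g' c - g' a)
  have hsplit := bregmanDiv_add_bregmanDiv g g' a b c
  have hbc : b - c = -(t • (g' c - g' a)) := by simp [b]
  rw [hbc, inner_neg_right, inner_smul_right, ← neg_sub (g' c), inner_neg_left,
    real_inner_self_eq_norm_sq] at hsplit
  have hs := hsmooth c b
  rw [hbc, norm_neg, norm_smul, mul_pow, Real.norm_eq_abs, sq_abs] at hs
  nlinarith [hconv a b]

theorem norm_sub_sq_le_mul_inner_of_bregmanDiv_le {C : ℝ} (hC : 0 ≤ C) {g : E → ℝ}
    {g' : E → E} (hconv : ∀ a b, 0 ≤ bregmanDiv g g' a b)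
    (hsmooth : ∀ a b, bregmanDiv g g' a b ≤ C / 2 * ‖b - a‖ ^ 2) (x y : E) :
    ‖g' x - g' y‖ ^ 2 ≤ C * ⟪g' x - g' y, x - y⟫_ℝ := by
  refine le_mul_of_forall_quadratic_le (sq_nonneg _) hC fun t ↦ ?_
  have hxy := mul_norm_sq_le_bregmanDiv hconv hsmooth y x t
  have hyx := mul_norm_sq_le_bregmanDiv hconv hsmooth x y t
  rw [norm_sub_rev] at hyx
  linarith [bregmanDiv_add_bregmanDiv_swap g g' x y]

theorem HasGradientAt.hasDerivAt_add_smul [CompleteSpace E] {f : E → ℝ} {g x v : E} {t : ℝ}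
    (hf : HasGradientAt f g (x + t • v)) :
    HasDerivAt (fun s : ℝ ↦ f (x + s • v)) ⟪g, v⟫_ℝ t := by
  have hline : HasDerivAt (fun s : ℝ ↦ x + s • v) v t := by
    simpa using ((hasDerivAt_id t).smul_const v).const_add x
  have := hf.hasFDerivAt.comp_hasDerivAt t hline
  simp only [toDual_apply_apply] at this
  exact this

theorem bregmanDiv_le_of_lipschitz [CompleteSpace E] {L : ℝ} {f : E → ℝ} {f' : E → E}
    (hf : ∀ x, HasGradientAt f (f' x) x) (hlip : ∀ x y, ‖f' x - f' y‖ ≤ L * ‖x - y‖)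
    (x y : E) : bregmanDiv f f' x y ≤ L / 2 * ‖y - x‖ ^ 2 := by
  set v := y - x
  have hφ (t : ℝ) := (hf (x + t • v)).hasDerivAt_add_smul
  have hq (t : ℝ) : HasDerivAt (fun t ↦ f x + t * ⟪f' x, v⟫_ℝ + L / 2 * t ^ 2 * ‖v‖ ^ 2)
      (⟪f' x, v⟫_ℝ + L * t * ‖v‖ ^ 2) t := by
    refine ((((hasDerivAt_id t).mul_const _).const_add (f x)).add
      (((hasDerivAt_pow 2 t).const_mul (L / 2)).mul_const (‖v‖ ^ 2))).congr_deriv ?_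
    push_cast
    ring
  have bound (t : ℝ) (ht : t ∈ Set.Ico (0 : ℝ) 1) :
      ⟪f' (x + t • v), v⟫_ℝ ≤ ⟪f' x, v⟫_ℝ + L * t * ‖v‖ ^ 2 := by
    have hstep : ‖f' (x + t • v) - f' x‖ ≤ L * (t * ‖v‖) := by
      simpa [norm_smul, abs_of_nonneg ht.1] using hlip (x + t • v) x
    calc ⟪f' (x + t • v), v⟫_ℝ = ⟪f' x, v⟫_ℝ + ⟪f' (x + t • v) - f' x, v⟫_ℝ := by
          rw [inner_sub_left]; ring
      _ ≤ ⟪f' x, v⟫_ℝ + ‖f' (x + t • v) - f' x‖ * ‖v‖ := by gcongr; exact real_inner_le_norm _ _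
      _ ≤ ⟪f' x, v⟫_ℝ + L * (t * ‖v‖) * ‖v‖ := by gcongr
      _ = ⟪f' x, v⟫_ℝ + L * t * ‖v‖ ^ 2 := by ring
  have hend := image_le_of_deriv_right_le_deriv_boundary
    (fun t _ ↦ (hφ t).continuousAt.continuousWithinAt) (fun t _ ↦ (hφ t).hasDerivWithinAt)
    (by simp) (fun t _ ↦ (hq t).continuousAt.continuousWithinAt)
    (fun t _ ↦ (hq t).hasDerivWithinAt) bound (Set.right_mem_Icc.2 zero_le_one)
  simp only [one_smul, v, add_sub_cancel, one_mul, one_pow] at hend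
  simp only [bregmanDiv]
  linarith

end Bregman

theorem stmt_0_general {n : ℕ} (μ L : ℝ) (hμ : 0 < μ)
    (f : EuclideanSpace ℝ (Fin n) → ℝ)
    (f' : EuclideanSpace ℝ (Fin n) → EuclideanSpace ℝ (Fin n))
    (hdiff : ∀ x, HasGradientAt f (f' x) x)
    (hsc : ∀ x y, f y ≥ f x + ⟪f' x, y - x⟫_ℝ + μ / 2 * ‖y - x‖ ^ 2)
    (hlip : ∀ x y, ‖f' x - f' y‖ ≤ L * ‖x - y‖) :
    ∀ x y, ⟪f' x - f' y, x - y⟫_ℝ ≥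
      (1 / (L + μ)) * ‖f' x - f' y‖ ^ 2 + (L * μ / (L + μ)) * ‖x - y‖ ^ 2 := by
  intro x y
  rcases eq_or_ne x y with rfl | hxy
  · simp
  have hstrong (a b) : μ / 2 * ‖b - a‖ ^ 2 ≤ bregmanDiv f f' a b := by
    simp only [bregmanDiv]; linarith [hsc a b]
  have hsmooth := bregmanDiv_le_of_lipschitz hdiff hlip
  have hμL : μ ≤ L := by
    have : 0 < ‖y - x‖ ^ 2 := pow_pos (norm_pos_iff.2 (sub_ne_zero.2 hxy.symm)) 2
    nlinarith [(hstrong x y).trans (hsmooth x y)]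
  have hco := norm_sub_sq_le_mul_inner_of_bregmanDiv_le (sub_nonneg.2 hμL)
    (g := fun z ↦ f z - μ / 2 * ‖z‖ ^ 2) (g' := fun z ↦ f' z - μ • z)
    (fun a b ↦ by rw [bregmanDiv_sub_mul_norm_sq]; linarith [hstrong a b])
    (fun a b ↦ by rw [bregmanDiv_sub_mul_norm_sq]; linarith [hsmooth a b]) x y
  rw [show f' x - μ • x - (f' y - μ • y) = (f' x - f' y) - μ • (x - y) by module] at hco
  generalize f' x - f' y = d at hco ⊢
  generalize x - y = s at hco ⊢
  rw [norm_sub_sq_real, inner_sub_left, real_inner_smul_right, real_inner_smul_left,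
    real_inner_self_eq_norm_sq, norm_smul, Real.norm_eq_abs, mul_pow, sq_abs] at hco
  simp only [ge_iff_le, div_mul_eq_mul_div, one_mul]
  rw [← add_div, div_le_iff₀ (by linarith)]
  linarith

/-- Coercivity inequality for strongly convex functions with Lipschitz gradient. -/
theorem stmt_0 {n : ℕ} (μ L : ℝ) (hμ : 0 < μ) (hL : 0 < L)
    (f : EuclideanSpace ℝ (Fin n) → ℝ)
    (f' : EuclideanSpace ℝ (Fin n) → EuclideanSpace ℝ (Fin n))
    (hdiff : ∀ x, HasGradientAt f (f' x) x)
    (hsc : ∀ x y, f y ≥ f x + ⟪f' x, y - x⟫_ℝ + μ / 2 * ‖y - x‖ ^ 2)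
    (hlip : ∀ x y, ‖f' x - f' y‖ ≤ L * ‖x - y‖) :
    ∀ x y, ⟪f' x - f' y, x - y⟫_ℝ ≥
      (1 / (L + μ)) * ‖f' x - f' y‖ ^ 2 + (L * μ / (L + μ)) * ‖x - y‖ ^ 2 :=
  stmt_0_general μ L hμ f f' hdiff hsc hlip
end

section
/- One step of the proximal gradient method with step-size α > 0 satisfies ‖x⁺ − x*‖ ≤ Q(α)‖x − x*‖, where x⁺ = prox_{αg}(x − α∇f(x)), x* is the minimizer of f + g, and Q(α) = max{|1 − αL|, |1 − αμ|}. -/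
/-!
Both `x⁺` and `x*` are proximal points: `x*` minimizes `f + g`, and `x⁺` minimizes
`½‖· - a‖² + α g` with `a = x - α ∇f(x)`. Testing each minimality against the segment towards the
other point gives two variational inequalities whose sum is
`‖x⁺ - x*‖² ≤ ⟪a - b, x⁺ - x*⟫` with `b = x* - α ∇f(x*)` (firm nonexpansiveness of the prox), so
`‖x⁺ - x*‖ ≤ ‖a - b‖`. The gradient step contracts: co-coercivity of the gradient of the convex,
`(L - μ)`-smooth function `f - μ/2 ‖·‖²` gives
`‖∇f x - ∇f y‖² + μL ‖x - y‖² ≤ (L + μ) ⟪∇f x - ∇f y, x - y⟫`, and with it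
`‖(x - x*) - α (∇f x - ∇f x*)‖²` is at most `(1 - αμ)² ‖x - x*‖²` when `α (L + μ) ≤ 2` and at
most `(1 - αL)² ‖x - x*‖²` otherwise.
-/

open InnerProductSpace Set Filter Topology

theorem le_mul_of_forall_quadratic_le_s5 {A B K : ℝ} (hK : 0 ≤ K)
    (h : ∀ s : ℝ, (2 * s - K * s ^ 2) * A ≤ B) : A ≤ K * B := by
  rcases hK.eq_or_lt with rfl | hK
  · suffices A = 0 by simp [this]
    by_contra hA0
    have hs := h ((B + 1) / (2 * A))
    have : 2 * ((B + 1) / (2 * A)) * A = B + 1 := by field_simp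
    simp only [zero_mul, sub_zero] at hs
    linarith
  · have := h K⁻¹
    field_simp at this
    linarith

theorem le_of_forall_le_add_mul {A B C : ℝ} (h : ∀ t : ℝ, 0 < t → t ≤ 1 → A ≤ B + t * C) :
    A ≤ B := by
  have hlim : Tendsto (fun t : ℝ => B + t * C) (𝓝[>] 0) (𝓝 B) := by
    have : Tendsto (fun t : ℝ => B + t * C) (𝓝 0) (𝓝 (B + 0 * C)) :=
      (continuous_const.add (continuous_id.mul continuous_const)).tendsto 0
    simpa using this.mono_left nhdsWithin_le_nhds
  refine ge_of_tendsto hlim ?_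
  filter_upwards [Ioc_mem_nhdsGT zero_lt_one] with t ht using h t ht.1 ht.2

theorem exists_coe_of_coe_add_mul_le {r s c b : ℝ} (hc : 0 < c) {u : EReal} (hu : u ≠ ⊥)
    (h : (r : EReal) + c * u ≤ s + c * b) : ∃ a : ℝ, u = a := by
  refine ⟨u.toReal, (EReal.coe_toReal ?_ hu).symm⟩
  rintro rfl
  rw [EReal.coe_mul_top_of_pos hc, EReal.coe_add_top, ← EReal.coe_mul, ← EReal.coe_add] at h
  exact EReal.coe_ne_top _ (top_le_iff.mp h)

section Module

variable {E : Type*} [AddCommGroup E] [Module ℝ E]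

theorem exists_coe_le_of_convex {g : E → EReal} (hg_bot : ∀ x, g x ≠ ⊥)
    (hg_conv : ∀ x y : E, ∀ t : ℝ, 0 ≤ t → t ≤ 1 →
      g (t • x + (1 - t) • y) ≤ (t : EReal) * g x + ((1 - t : ℝ) : EReal) * g y)
    {x y : E} {a b : ℝ} (hx : g x = a) (hy : g y = b) {t : ℝ} (ht0 : 0 ≤ t) (ht1 : t ≤ 1) :
    ∃ r : ℝ, g (t • x + (1 - t) • y) = r ∧ r ≤ t * a + (1 - t) * b := by
  have h := hg_conv x y t ht0 ht1
  rw [hx, hy] at h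
  have h' : g (t • x + (1 - t) • y) ≤ ((t * a + (1 - t) * b : ℝ) : EReal) := by exact_mod_cast h
  have hne := ne_top_of_le_ne_top (EReal.coe_ne_top _) h'
  refine ⟨_, (EReal.coe_toReal hne (hg_bot _)).symm, ?_⟩
  rwa [← EReal.coe_toReal hne (hg_bot _), EReal.coe_le_coe_iff] at h'

end Module

section InnerProduct

variable {E : Type*} [NormedAddCommGroup E] [InnerProductSpace ℝ E]

theorem mul_le_inner_add_mul_of_minimizer {φ : E → ℝ} {g : E → EReal} (hg_bot : ∀ x, g x ≠ ⊥)
    (hg_conv : ∀ x y : E, ∀ t : ℝ, 0 ≤ t → t ≤ 1 →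
      g (t • x + (1 - t) • y) ≤ (t : EReal) * g x + ((1 - t : ℝ) : EReal) * g y)
    {p z : E} {C c : ℝ} (hφ : ∀ u, φ u ≤ φ z + ⟪p, u - z⟫_ℝ + C * ‖u - z‖ ^ 2) (hc : 0 < c)
    (hmin : ∀ u, (φ z : EReal) + c * g z ≤ φ u + c * g u) {y : E} {a b : ℝ}
    (hz : g z = a) (hy : g y = b) :
    c * a ≤ ⟪p, y - z⟫_ℝ + c * b := by
  refine le_of_forall_le_add_mul (C := C * ‖y - z‖ ^ 2) fun t ht0 ht1 => ?_
  obtain ⟨r, hr, hr_le⟩ := exists_coe_le_of_convex hg_bot hg_conv hy hz ht0.le ht1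
  set u := t • y + (1 - t) • z
  have hmin_u : φ z + c * a ≤ φ u + c * r := by
    have := hmin u
    rw [hz, hr] at this
    exact_mod_cast this
  have hφ_u := hφ u
  rw [show u - z = t • (y - z) by module, real_inner_smul_right, norm_smul, mul_pow,
    Real.norm_of_nonneg ht0.le] at hφ_u
  have : t * (c * a) ≤ t * (⟪p, y - z⟫_ℝ + c * b + t * (C * ‖y - z‖ ^ 2)) := by
    linear_combination hmin_u + hφ_u + mul_le_mul_of_nonneg_left hr_le hc.le
  exact le_of_mul_le_mul_left this ht0

theorem norm_le_of_sq_norm_le_inner {p q : E} (h : ‖p‖ ^ 2 ≤ ⟪q, p⟫_ℝ) : ‖p‖ ≤ ‖q‖ := by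
  nlinarith [real_inner_le_norm q p, norm_nonneg p, norm_nonneg q]

theorem image_le_of_lipschitz_gradient [CompleteSpace E] {f : E → ℝ} {f' : E → E} {L : ℝ}
    (hf : ∀ x, HasGradientAt f (f' x) x) (hlip : ∀ x y, ‖f' x - f' y‖ ≤ L * ‖x - y‖) (x y : E) :
    f y ≤ f x + ⟪f' x, y - x⟫_ℝ + L / 2 * ‖y - x‖ ^ 2 := by
  set v := y - x
  set ψ : ℝ → ℝ := fun t => f (x + t • v) - t * ⟪f' x, v⟫_ℝ - t ^ 2 * (L / 2 * ‖v‖ ^ 2)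
  have hψ : ∀ t, HasDerivAt ψ (⟪f' (x + t • v) - f' x, v⟫_ℝ - t * (L * ‖v‖ ^ 2)) t := by
    intro t
    have hline : HasDerivAt (fun t : ℝ => x + t • v) v t := by
      simpa using ((hasDerivAt_id t).smul_const v).const_add x
    have hf_line : HasDerivAt (f ∘ fun t => x + t • v) ⟪f' (x + t • v), v⟫_ℝ t := by
      simpa using (hf _).hasFDerivAt.comp_hasDerivAt t hline
    refine ((hf_line.sub ((hasDerivAt_id t).mul_const _)).sub
      ((hasDerivAt_pow 2 t).mul_const _)).congr_deriv ?_
    rw [inner_sub_left]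
    simp only [Nat.cast_ofNat]
    ring
  have hψ_anti : AntitoneOn ψ (Icc 0 1) := by
    refine antitoneOn_of_hasDerivWithinAt_nonpos (convex_Icc 0 1)
      (fun t _ => (hψ t).continuousAt.continuousWithinAt) (fun t _ => (hψ t).hasDerivWithinAt)
      fun t ht => ?_
    rw [interior_Icc] at ht
    have : ⟪f' (x + t • v) - f' x, v⟫_ℝ ≤ t * (L * ‖v‖ ^ 2) :=
      calc ⟪f' (x + t • v) - f' x, v⟫_ℝ ≤ ‖f' (x + t • v) - f' x‖ * ‖v‖ := real_inner_le_norm _ _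
        _ ≤ L * ‖t • v‖ * ‖v‖ := by gcongr; simpa using hlip (x + t • v) x
        _ = t * (L * ‖v‖ ^ 2) := by rw [norm_smul, Real.norm_of_nonneg ht.1.le]; ring
    linarith
  have h01 := hψ_anti (left_mem_Icc.2 zero_le_one) (right_mem_Icc.2 zero_le_one) zero_le_one
  simp only [ψ, v, one_smul, zero_smul, add_zero, add_sub_cancel] at h01
  linarith

theorem mul_sq_norm_sub_le_bregman {φ : E → ℝ} {φ' : E → E} {K : ℝ}
    (hlow : ∀ x y, φ x + ⟪φ' x, y - x⟫_ℝ ≤ φ y)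
    (hup : ∀ x y, φ y ≤ φ x + ⟪φ' x, y - x⟫_ℝ + K / 2 * ‖y - x‖ ^ 2) (x y : E) (s : ℝ) :
    (s - K / 2 * s ^ 2) * ‖φ' x - φ' y‖ ^ 2 ≤ φ y - φ x - ⟪φ' x, y - x⟫_ℝ := by
  set e := φ' x - φ' y
  have h1 := hlow x (y + s • e)
  have h2 := hup y (y + s • e)
  rw [show y + s • e - x = (y - x) + s • e by abel, inner_add_right, real_inner_smul_right] at h1
  rw [add_sub_cancel_left, real_inner_smul_right, norm_smul, mul_pow, Real.norm_eq_abs,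
    sq_abs] at h2
  have he : ⟪φ' x, e⟫_ℝ - ⟪φ' y, e⟫_ℝ = ‖e‖ ^ 2 := by
    rw [← inner_sub_left, real_inner_self_eq_norm_sq]
  linear_combination h1 + h2 - s * he

theorem sq_norm_sub_le_mul_inner_of_quadratic_bounds {φ : E → ℝ} {φ' : E → E} {K : ℝ}
    (hK : 0 ≤ K)
    (hlow : ∀ x y, φ x + ⟪φ' x, y - x⟫_ℝ ≤ φ y)
    (hup : ∀ x y, φ y ≤ φ x + ⟪φ' x, y - x⟫_ℝ + K / 2 * ‖y - x‖ ^ 2) (x y : E) :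
    ‖φ' x - φ' y‖ ^ 2 ≤ K * ⟪φ' x - φ' y, x - y⟫_ℝ := by
  refine le_mul_of_forall_quadratic_le_s5 hK fun s => ?_
  have hxy := mul_sq_norm_sub_le_bregman hlow hup x y s
  have hyx := mul_sq_norm_sub_le_bregman hlow hup y x s
  rw [norm_sub_rev (φ' y)] at hyx
  have : ⟪φ' x - φ' y, x - y⟫_ℝ = -⟪φ' x, y - x⟫_ℝ - ⟪φ' y, x - y⟫_ℝ := by
    rw [inner_sub_left, ← neg_sub y x, inner_neg_right]
  linarith

theorem sq_norm_sub_add_mul_sq_norm_sub_le [CompleteSpace E] {f : E → ℝ} {f' : E → E} {μ L : ℝ}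
    (hμL : μ ≤ L) (hf : ∀ x, HasGradientAt f (f' x) x)
    (hsc : ∀ x y, f y ≥ f x + ⟪f' x, y - x⟫_ℝ + μ / 2 * ‖y - x‖ ^ 2)
    (hlip : ∀ x y, ‖f' x - f' y‖ ≤ L * ‖x - y‖) (x y : E) :
    ‖f' x - f' y‖ ^ 2 + μ * L * ‖x - y‖ ^ 2 ≤ (L + μ) * ⟪f' x - f' y, x - y⟫_ℝ := by
  have hsq : ∀ x y : E, ‖y‖ ^ 2 = ‖x‖ ^ 2 + 2 * ⟪x, y - x⟫_ℝ + ‖y - x‖ ^ 2 := fun x y => by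
    rw [← norm_add_sq_real, add_sub_cancel]
  have hcocoercive := sq_norm_sub_le_mul_inner_of_quadratic_bounds
    (φ := fun u => f u - μ / 2 * ‖u‖ ^ 2) (φ' := fun u => f' u - μ • u) (K := L - μ)
    (sub_nonneg.2 hμL) (fun x y => by
      simp only [inner_sub_left, real_inner_smul_left]
      linear_combination hsc x y + μ / 2 * hsq x y)
    (fun x y => by
      simp only [inner_sub_left, real_inner_smul_left]
      linear_combination image_le_of_lipschitz_gradient hf hlip x y - μ / 2 * hsq x y) x y
  set w := f' x - f' y
  set v := x - y
  rw [show f' x - μ • x - (f' y - μ • y) = w - μ • v by module, norm_sub_sq_real,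
    real_inner_smul_right, inner_sub_left w, real_inner_smul_left, real_inner_self_eq_norm_sq,
    norm_smul, mul_pow, Real.norm_eq_abs, sq_abs] at hcocoercive
  linear_combination hcocoercive

theorem norm_sub_smul_le_of_interpolation {μ L α : ℝ} (hμ : 0 < μ) (hμL : μ ≤ L) (hα : 0 ≤ α)
    {v w : E} (h : ‖w‖ ^ 2 + μ * L * ‖v‖ ^ 2 ≤ (L + μ) * ⟪w, v⟫_ℝ) :
    ‖v - α • w‖ ≤ max |1 - α * L| |1 - α * μ| * ‖v‖ := by
  have hcs := real_inner_le_norm w v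
  have hprod : (‖w‖ - μ * ‖v‖) * (‖w‖ - L * ‖v‖) ≤ 0 := by
    nlinarith [mul_le_mul_of_nonneg_left hcs (by linarith : 0 ≤ L + μ)]
  have hμLv := mul_le_mul_of_nonneg_right hμL (norm_nonneg v)
  have hw_lo : (μ * ‖v‖) ^ 2 ≤ ‖w‖ ^ 2 :=
    pow_le_pow_left₀ (by positivity) (by nlinarith) 2
  have hw_hi : ‖w‖ ^ 2 ≤ (L * ‖v‖) ^ 2 :=
    pow_le_pow_left₀ (norm_nonneg w) (by nlinarith) 2
  have hexp : ‖v - α • w‖ ^ 2 = ‖v‖ ^ 2 - 2 * α * ⟪w, v⟫_ℝ + α ^ 2 * ‖w‖ ^ 2 := by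
    rw [norm_sub_sq_real, real_inner_smul_right, norm_smul, mul_pow, Real.norm_of_nonneg hα,
      real_inner_comm]
    ring
  have of_sq_le : ∀ c : ℝ, ‖v - α • w‖ ^ 2 ≤ (c * ‖v‖) ^ 2 → ‖v - α • w‖ ≤ |c| * ‖v‖ :=
    fun c hc => (pow_le_pow_iff_left₀ (norm_nonneg _) (by positivity) two_ne_zero).1
      (by rwa [mul_pow, sq_abs, ← mul_pow])
  rcases le_or_gt (α * (L + μ)) 2 with hsmall | hlarge
  · refine (of_sq_le _ ?_).trans (by gcongr; exact le_max_right _ _)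
    nlinarith [mul_le_mul_of_nonneg_left h (by positivity : (0:ℝ) ≤ 2 * α),
      mul_nonneg (mul_nonneg hα (by linarith : (0:ℝ) ≤ 2 - α * (L + μ)))
        (by linarith [mul_pow μ ‖v‖ 2] : (0:ℝ) ≤ ‖w‖ ^ 2 - μ ^ 2 * ‖v‖ ^ 2)]
  · refine (of_sq_le _ ?_).trans (by gcongr; exact le_max_left _ _)
    nlinarith [mul_le_mul_of_nonneg_left h (by positivity : (0:ℝ) ≤ 2 * α),
      mul_nonneg (mul_nonneg hα (by linarith : (0:ℝ) ≤ α * (L + μ) - 2))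
        (by linarith [mul_pow L ‖v‖ 2] : (0:ℝ) ≤ L ^ 2 * ‖v‖ ^ 2 - ‖w‖ ^ 2)]

end InnerProduct

theorem stmt_5_general {n : ℕ} (μ L : ℝ) (hμ : 0 < μ) (hμL : μ ≤ L)
    (f : EuclideanSpace ℝ (Fin n) → ℝ)
    (f' : EuclideanSpace ℝ (Fin n) → EuclideanSpace ℝ (Fin n))
    (hdiff : ∀ x, HasGradientAt f (f' x) x)
    (hsc : ∀ x y, f y ≥ f x + ⟪f' x, y - x⟫_ℝ + μ / 2 * ‖y - x‖ ^ 2)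
    (hlip : ∀ x y, ‖f' x - f' y‖ ≤ L * ‖x - y‖)
    (g : EuclideanSpace ℝ (Fin n) → EReal)
    (hproper : ∃ x, g x ≠ ⊤) (hnotbot : ∀ x, g x ≠ ⊥)
    (hconv : ∀ x y : EuclideanSpace ℝ (Fin n), ∀ t : ℝ, 0 ≤ t → t ≤ 1 →
      g (t • x + (1 - t) • y) ≤ (t : EReal) * g x + ((1 - t : ℝ) : EReal) * g y)
    (xstar : EuclideanSpace ℝ (Fin n))
    (hmin : ∀ y, (f xstar : EReal) + g xstar ≤ (f y : EReal) + g y)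
    (α : ℝ) (hα : 0 < α)
    (x xplus : EuclideanSpace ℝ (Fin n))
    (hstep : ∀ y, ((1/2 * ‖xplus - (x - α • f' x)‖^2 : ℝ) : EReal) + (α : EReal) * g xplus ≤
      ((1/2 * ‖y - (x - α • f' x)‖^2 : ℝ) : EReal) + (α : EReal) * g y) :
    ‖xplus - xstar‖ ≤ max |1 - α * L| |1 - α * μ| * ‖x - xstar‖ := by
  set a := x - α • f' x
  have hmin₁ : ∀ y, (f xstar : EReal) + (1 : ℝ) * g xstar ≤ f y + (1 : ℝ) * g y := by
    simpa using hmin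
  obtain ⟨y₀, hy₀⟩ := hproper
  obtain ⟨Gs, hGs⟩ := exists_coe_of_coe_add_mul_le one_pos (hnotbot xstar)
    (b := (g y₀).toReal) (by simpa [EReal.coe_toReal hy₀ (hnotbot y₀)] using hmin₁ y₀)
  obtain ⟨Gp, hGp⟩ := exists_coe_of_coe_add_mul_le hα (hnotbot xplus) (hGs ▸ hstep xstar)
  have hopt_star : 1 * Gs ≤ ⟪f' xstar, xplus - xstar⟫_ℝ + 1 * Gp :=
    mul_le_inner_add_mul_of_minimizer hnotbot hconv (image_le_of_lipschitz_gradient hdiff hlip _)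
      one_pos hmin₁ hGs hGp
  have hopt_plus : α * Gp ≤ ⟪xplus - a, xstar - xplus⟫_ℝ + α * Gs := by
    refine mul_le_inner_add_mul_of_minimizer (φ := fun u => 1 / 2 * ‖u - a‖ ^ 2) hnotbot hconv
      (C := 1 / 2) (fun u => ?_) hα hstep hGp hGs
    rw [← sub_add_sub_cancel u xplus a, norm_add_sq_real, real_inner_comm]
    linarith
  have hfirm : ‖xplus - xstar‖ ^ 2 ≤ ⟪(x - xstar) - α • (f' x - f' xstar), xplus - xstar⟫_ℝ := by
    have hswap : ⟪xplus - a, xstar - xplus⟫_ℝ = ⟪a - xplus, xplus - xstar⟫_ℝ := by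
      rw [← inner_neg_neg, neg_sub, neg_sub]
    rw [show (x - xstar) - α • (f' x - f' xstar) = (a - xplus) + α • f' xstar + (xplus - xstar) by
      module, inner_add_left, inner_add_left, real_inner_smul_left, real_inner_self_eq_norm_sq]
    linear_combination hopt_plus + α * hopt_star + hswap
  exact (norm_le_of_sq_norm_le_inner hfirm).trans <|
    norm_sub_smul_le_of_interpolation hμ hμL hα.le
      (sq_norm_sub_add_mul_sq_norm_sub_le hμL hdiff hsc hlip x xstar)

/-- One proximal gradient step with step size `α > 0` contracts the distance to the
minimizer `x*` of `f + g` by the factor `Q(α) = max {|1 - αL|, |1 - αμ|}`.  Here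
`xplus = prox_{αg}(x - α ∇f(x))` is expressed as the minimizer of the prox subproblem. -/
theorem stmt_5 {n : ℕ} (μ L : ℝ) (hμ : 0 < μ) (hμL : μ ≤ L)
    (f : EuclideanSpace ℝ (Fin n) → ℝ)
    (f' : EuclideanSpace ℝ (Fin n) → EuclideanSpace ℝ (Fin n))
    (hdiff : ∀ x, HasGradientAt f (f' x) x)
    (hsc : ∀ x y, f y ≥ f x + ⟪f' x, y - x⟫_ℝ + μ / 2 * ‖y - x‖ ^ 2)
    (hlip : ∀ x y, ‖f' x - f' y‖ ≤ L * ‖x - y‖)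
    (g : EuclideanSpace ℝ (Fin n) → EReal)
    (hproper : ∃ x, g x ≠ ⊤) (hnotbot : ∀ x, g x ≠ ⊥)
    (hconv : ∀ x y : EuclideanSpace ℝ (Fin n), ∀ t : ℝ, 0 ≤ t → t ≤ 1 →
      g (t • x + (1 - t) • y) ≤ (t : EReal) * g x + ((1 - t : ℝ) : EReal) * g y)
    (hlsc : LowerSemicontinuous g)
    (xstar : EuclideanSpace ℝ (Fin n))
    (hmin : ∀ y, (f xstar : EReal) + g xstar ≤ (f y : EReal) + g y)
    (α : ℝ) (hα : 0 < α)
    (x xplus : EuclideanSpace ℝ (Fin n))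
    (hstep : ∀ y, ((1/2 * ‖xplus - (x - α • f' x)‖^2 : ℝ) : EReal) + (α : EReal) * g xplus ≤
      ((1/2 * ‖y - (x - α • f' x)‖^2 : ℝ) : EReal) + (α : EReal) * g y) :
    ‖xplus - xstar‖ ≤ max |1 - α * L| |1 - α * μ| * ‖x - xstar‖ :=
  stmt_5_general μ L hμ hμL f f' hdiff hsc hlip g hproper hnotbot hconv xstar hmin α hα x xplus
    hstep
end

section
/- For every iteration k ≥ 1 of the proximal gradient method x^{k+1} = prox_{αg}(x^k − α∇f(x^k)) with constant step-size α > 0, we have ‖x^k − x*‖ ≤ Q(α)^k ‖x⁰ − x*‖, where Q(α) = max{|1 − αL|, |1 − αμ|}. -/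
/-!
The minimizer `x*` is a fixed point of the forward–backward map
`T x = prox_{αg} (x - α ∇f x)` (first-order optimality), and the proximal map is nonexpansive
(adding the first-order conditions of two proximal problems). It remains to see that the
gradient step `x ↦ x - α ∇f x` is `Q(α)`-Lipschitz. Write `f = h + μ/2 ‖·‖²`: `h` is convex
and obeys the quadratic upper bound with constant `L - μ`, so `∇h` is `(L - μ)`-cocoercive
(Baillon–Haddad), and `x - α ∇f x = (1 - αμ) x - α ∇h x` has Lipschitz constant
`max |1 - αL| |1 - αμ|`. Since `g` may take the value `⊤`, the argument runs on the real-valued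
function `toReal ∘ g` over the effective domain of `g`, where it is convex.
-/

open InnerProductSpace Set Filter Topology

variable {E : Type*} [NormedAddCommGroup E] [InnerProductSpace ℝ E]

theorem le_add_inner_add_of_lipschitz_gradient [CompleteSpace E] {f : E → ℝ} {f' : E → E}
    {K : ℝ} (hf : ∀ x, HasGradientAt f (f' x) x) (hK : ∀ x y, ‖f' x - f' y‖ ≤ K * ‖x - y‖)
    (x y : E) : f y ≤ f x + ⟪f' x, y - x⟫_ℝ + K / 2 * ‖y - x‖ ^ 2 := by
  set d := y - x
  let φ : ℝ → ℝ := fun t => f (x + t • d) - t * ⟪f' x, d⟫_ℝ - K / 2 * t ^ 2 * ‖d‖ ^ 2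
  have hφ (t : ℝ) : HasDerivAt φ (⟪f' (x + t • d) - f' x, d⟫_ℝ - K * t * ‖d‖ ^ 2) t := by
    have hline : HasDerivAt (fun s : ℝ => x + s • d) d t := by
      simpa using ((hasDerivAt_id t).smul_const d).const_add x
    have hf_line := (hasGradientAt_iff_hasFDerivAt.1 (hf (x + t • d))).comp_hasDerivAt t hline
    simp only [toDual_apply_apply] at hf_line
    have hlin : HasDerivAt (fun s : ℝ => s * ⟪f' x, d⟫_ℝ) ⟪f' x, d⟫_ℝ t := by
      simpa using (hasDerivAt_id t).mul_const ⟪f' x, d⟫_ℝ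
    have hsq : HasDerivAt (fun s : ℝ => K / 2 * s ^ 2 * ‖d‖ ^ 2) (K * t * ‖d‖ ^ 2) t :=
      (((hasDerivAt_pow 2 t).const_mul (K / 2)).mul_const (‖d‖ ^ 2)).congr_deriv (by ring)
    rw [inner_sub_left]
    exact (hf_line.sub hlin).sub hsq
  have hanti : AntitoneOn φ (Icc 0 1) := by
    refine antitoneOn_of_hasDerivWithinAt_nonpos (convex_Icc 0 1)
      (fun t _ => (hφ t).continuousAt.continuousWithinAt) (fun t _ => (hφ t).hasDerivWithinAt) ?_
    intro t ht
    rw [interior_Icc] at ht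
    calc ⟪f' (x + t • d) - f' x, d⟫_ℝ - K * t * ‖d‖ ^ 2
        ≤ ‖f' (x + t • d) - f' x‖ * ‖d‖ - K * t * ‖d‖ ^ 2 := by gcongr; exact real_inner_le_norm _ _
      _ ≤ K * ‖t • d‖ * ‖d‖ - K * t * ‖d‖ ^ 2 := by
          gcongr; simpa using hK (x + t • d) x
      _ = 0 := by rw [norm_smul, Real.norm_of_nonneg ht.1.le]; ring
  have h01 := hanti (left_mem_Icc.2 zero_le_one) (right_mem_Icc.2 zero_le_one) zero_le_one
  simp only [φ, zero_smul, add_zero, one_smul, d, add_sub_cancel] at h01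
  linarith

theorem inner_add_sub_nonneg_of_isMinOn {s : Set E} {φ ψ : E → ℝ} (hψ : ConvexOn ℝ s ψ)
    {a G : E} {K : ℝ} (hφ : ∀ y, φ y ≤ φ a + ⟪G, y - a⟫_ℝ + K / 2 * ‖y - a‖ ^ 2)
    (hmin : IsMinOn (fun y => φ y + ψ y) s a) (ha : a ∈ s) {u : E} (hu : u ∈ s) :
    0 ≤ ⟪G, u - a⟫_ℝ + (ψ u - ψ a) := by
  set A := ⟪G, u - a⟫_ℝ + (ψ u - ψ a)
  set B := K / 2 * ‖u - a‖ ^ 2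
  have hsmall : ∀ t ∈ Ioc (0 : ℝ) 1, 0 ≤ A + t * B := by
    rintro t ⟨ht0, ht1⟩
    have hy : a + t • (u - a) = t • u + (1 - t) • a := by module
    have hmin_t : φ a + ψ a ≤ φ (t • u + (1 - t) • a) + ψ (t • u + (1 - t) • a) :=
      hmin (hψ.1 hu ha ht0.le (by linarith) (by ring))
    have hconv := hψ.2 hu ha ht0.le (by linarith : 0 ≤ 1 - t) (by ring)
    have hquad := hφ (a + t • (u - a))
    simp only [smul_eq_mul] at hconv
    rw [add_sub_cancel_left, inner_smul_right, norm_smul, Real.norm_of_nonneg ht0.le, hy] at hquad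
    have hexpand : t * (A + t * B) = t * ⟪G, u - a⟫_ℝ + (t * ψ u + (1 - t) * ψ a - ψ a)
        + K / 2 * (t * ‖u - a‖) ^ 2 := by simp only [A, B]; ring
    exact nonneg_of_mul_nonneg_right (by linarith) ht0
  have hlim : Tendsto (fun t => A + t * B) (𝓝[>] 0) (𝓝 A) := by
    have hcont : Continuous fun t : ℝ => A + t * B := by fun_prop
    simpa using tendsto_nhdsWithin_of_tendsto_nhds (hcont.tendsto 0)
  exact ge_of_tendsto hlim (eventually_of_mem (Ioc_mem_nhdsGT zero_lt_one) hsmall)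

theorem half_norm_sub_sq_eq (a p y : E) :
    1 / 2 * ‖y - p‖ ^ 2 = 1 / 2 * ‖a - p‖ ^ 2 + ⟪a - p, y - a⟫_ℝ + 1 / 2 * ‖y - a‖ ^ 2 := by
  rw [show y - p = (a - p) + (y - a) by abel, norm_add_sq_real]
  ring

theorem norm_sub_le_of_isMinOn_prox {s : Set E} {ψ : E → ℝ} (hψ : ConvexOn ℝ s ψ)
    {p q u v : E} (hu : IsMinOn (fun y => 1 / 2 * ‖y - p‖ ^ 2 + ψ y) s u) (hus : u ∈ s)
    (hv : IsMinOn (fun y => 1 / 2 * ‖y - q‖ ^ 2 + ψ y) s v) (hvs : v ∈ s) :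
    ‖u - v‖ ≤ ‖p - q‖ := by
  have hoptu := inner_add_sub_nonneg_of_isMinOn (K := 1) hψ
    (fun y => (half_norm_sub_sq_eq u p y).le) hu hus hvs
  have hoptv := inner_add_sub_nonneg_of_isMinOn (K := 1) hψ
    (fun y => (half_norm_sub_sq_eq v q y).le) hv hvs hus
  have hfirm : ‖u - v‖ ^ 2 ≤ ⟪p - q, u - v⟫_ℝ := by
    have : ⟪u - p, v - u⟫_ℝ + ⟪v - q, u - v⟫_ℝ = ⟪p - q, u - v⟫_ℝ - ‖u - v‖ ^ 2 :=
      calc ⟪u - p, v - u⟫_ℝ + ⟪v - q, u - v⟫_ℝ = ⟪v - q, u - v⟫_ℝ - ⟪u - p, u - v⟫_ℝ := by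
            rw [← neg_sub u v, inner_neg_right]; ring
        _ = ⟪(p - q) - (u - v), u - v⟫_ℝ := by rw [← inner_sub_left]; congr 1; abel
        _ = ⟪p - q, u - v⟫_ℝ - ‖u - v‖ ^ 2 := by
            rw [inner_sub_left, real_inner_self_eq_norm_sq]
    linarith
  nlinarith [real_inner_le_norm (p - q) (u - v), norm_nonneg (u - v), norm_nonneg (p - q)]

theorem isMinOn_prox_of_isMinOn_add {s : Set E} {f ψ : E → ℝ} (hψ : ConvexOn ℝ s ψ)
    {a G : E} {K α : ℝ} (hf : ∀ y, f y ≤ f a + ⟪G, y - a⟫_ℝ + K / 2 * ‖y - a‖ ^ 2)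
    (hmin : IsMinOn (fun y => f y + ψ y) s a) (ha : a ∈ s) (hα : 0 ≤ α) :
    IsMinOn (fun y => 1 / 2 * ‖y - (a - α • G)‖ ^ 2 + α * ψ y) s a := by
  refine isMinOn_iff.2 fun y hy => ?_
  have hopt := mul_nonneg hα (inner_add_sub_nonneg_of_isMinOn hψ hf hmin ha hy)
  rw [half_norm_sub_sq_eq a (a - α • G) y, sub_sub_cancel, real_inner_smul_left]
  nlinarith [sq_nonneg ‖y - a‖]

theorem norm_sub_sq_le_mul_inner_of_convex {h : E → ℝ} {h' : E → E} {K : ℝ} (hK : 0 ≤ K)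
    (hlower : ∀ x y, h x + ⟪h' x, y - x⟫_ℝ ≤ h y)
    (hupper : ∀ x y, h y ≤ h x + ⟪h' x, y - x⟫_ℝ + K / 2 * ‖y - x‖ ^ 2) (x y : E) :
    ‖h' x - h' y‖ ^ 2 ≤ K * ⟪h' x - h' y, x - y⟫_ℝ := by
  have hgain : ∀ (t : ℝ) (a b : E), t * ‖h' b - h' a‖ ^ 2 - K / 2 * t ^ 2 * ‖h' b - h' a‖ ^ 2
      ≤ h b - h a - ⟪h' a, b - a⟫_ℝ := by
    intro t a b
    set w := h' b - h' a
    have hl := hlower a (b - t • w)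
    have hu := hupper b (b - t • w)
    rw [sub_sub_cancel_left, norm_neg, norm_smul, Real.norm_eq_abs, mul_pow, sq_abs,
      inner_neg_right, real_inner_smul_right] at hu
    rw [show b - t • w - a = (b - a) - t • w by abel, inner_sub_right, real_inner_smul_right] at hl
    have : t * ⟪h' b, w⟫_ℝ - t * ⟪h' a, w⟫_ℝ = t * ‖w‖ ^ 2 := by
      rw [← mul_sub, ← inner_sub_left, real_inner_self_eq_norm_sq]
    linarith
  set W := ‖h' x - h' y‖ ^ 2
  set S := ⟪h' x - h' y, x - y⟫_ℝ
  have hgap : ∀ t : ℝ, (2 * t - K * t ^ 2) * W ≤ S := by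
    intro t
    have h₁ := hgain t x y
    have h₂ := hgain t y x
    rw [norm_sub_rev] at h₁
    have : S = ⟪h' x, x - y⟫_ℝ - ⟪h' y, x - y⟫_ℝ := inner_sub_left _ _ _
    have : ⟪h' x, y - x⟫_ℝ = - ⟪h' x, x - y⟫_ℝ := by rw [← inner_neg_right, neg_sub]
    linarith
  -- The optimal choice `t = 1 / K` is not available when `K = 0`: take `t = 1 / (K + ε)`, `ε → 0⁺`.
  have hε : ∀ ε > 0, W ≤ (K + ε) * S := by
    intro ε hε
    have hKε : 0 < K + ε := by linarith
    have hW : 0 ≤ W := sq_nonneg _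
    have h₁ : (K + 2 * ε) * W ≤ (K + ε) ^ 2 * S := by
      have := mul_le_mul_of_nonneg_left (hgap (K + ε)⁻¹) (sq_nonneg (K + ε))
      have e : (K + ε) ^ 2 * ((2 * (K + ε)⁻¹ - K * (K + ε)⁻¹ ^ 2) * W) = (K + 2 * ε) * W := by
        field_simp
        ring
      linarith
    refine le_of_mul_le_mul_left ?_ hKε
    nlinarith
  have hlim : Tendsto (fun ε => (K + ε) * S) (𝓝[>] 0) (𝓝 (K * S)) := by
    have hcont : Continuous fun ε : ℝ => (K + ε) * S := by fun_prop
    simpa using tendsto_nhdsWithin_of_tendsto_nhds (hcont.tendsto 0)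
  exact ge_of_tendsto hlim (eventually_nhdsWithin_of_forall hε)

theorem norm_smul_sub_smul_le_of_norm_sq_le_mul_inner {u w : E} {K c α : ℝ} (hK : 0 ≤ K)
    (hα : 0 ≤ α) (hw : ‖w‖ ^ 2 ≤ K * ⟪w, u⟫_ℝ) :
    ‖c • u - α • w‖ ≤ max |c - α * K| |c| * ‖u‖ := by
  set Q := max |c - α * K| |c|
  set a := ‖u‖ ^ 2
  set b := ‖w‖ ^ 2
  set s := ⟪w, u⟫_ℝ
  have ha : 0 ≤ a := sq_nonneg _
  have hb : 0 ≤ b := sq_nonneg _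
  have hCS : s ^ 2 ≤ b * a := by
    simpa [mul_pow] using pow_le_pow_left₀ (abs_nonneg s) (abs_real_inner_le_norm w u) 2
  have hs : 0 ≤ s := by
    by_contra! hneg
    have hb0 : b = 0 := by nlinarith [mul_nonpos_of_nonneg_of_nonpos hK hneg.le]
    rw [hb0, zero_mul] at hCS
    nlinarith
  have hQc : c ^ 2 ≤ Q ^ 2 := by
    simpa using pow_le_pow_left₀ (abs_nonneg c) (le_max_right |c - α * K| _) 2
  have hQcK : (c - α * K) ^ 2 ≤ Q ^ 2 := by
    simpa using pow_le_pow_left₀ (abs_nonneg _) (le_max_left _ |c|) 2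
  have hexpand : ‖c • u - α • w‖ ^ 2 = c ^ 2 * a - 2 * c * α * s + α ^ 2 * b := by
    rw [norm_sub_sq_real, norm_smul, norm_smul, real_inner_smul_left, real_inner_smul_right,
      real_inner_comm, mul_pow, mul_pow, Real.norm_eq_abs, Real.norm_eq_abs, sq_abs, sq_abs]
    ring
  have hαb : α ^ 2 * b ≤ α ^ 2 * (K * s) := mul_le_mul_of_nonneg_left hw (sq_nonneg α)
  have hsq : ‖c • u - α • w‖ ^ 2 ≤ (Q * ‖u‖) ^ 2 := by
    rw [hexpand, mul_pow]
    rcases le_total (α * K) (2 * c) with hsmall | hlarge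
    · nlinarith [mul_nonneg hα hs]
    · have hsa : s ≤ K * a := by
        rcases hs.eq_or_lt with hs0 | hspos
        · rw [← hs0]; positivity
        · nlinarith [mul_le_mul_of_nonneg_right hw ha]
      nlinarith [mul_le_mul_of_nonneg_left hsa hα]
  exact (pow_le_pow_iff_left₀ (norm_nonneg _) (by positivity) two_ne_zero).1 hsq

theorem norm_sub_smul_sub_sub_smul_le [CompleteSpace E] {f : E → ℝ} {f' : E → E} {μ L α : ℝ}
    (hμL : μ ≤ L) (hα : 0 ≤ α) (hf : ∀ x, HasGradientAt f (f' x) x)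
    (hsc : ∀ x y, f y ≥ f x + ⟪f' x, y - x⟫_ℝ + μ / 2 * ‖y - x‖ ^ 2)
    (hlip : ∀ x y, ‖f' x - f' y‖ ≤ L * ‖x - y‖) (x y : E) :
    ‖(x - α • f' x) - (y - α • f' y)‖ ≤ max |1 - α * L| |1 - α * μ| * ‖x - y‖ := by
  set h : E → ℝ := fun z => f z - μ / 2 * ‖z‖ ^ 2
  set h' : E → E := fun z => f' z - μ • z
  have hbregman : ∀ a b, h b - h a - ⟪h' a, b - a⟫_ℝ
      = f b - f a - ⟪f' a, b - a⟫_ℝ - μ / 2 * ‖b - a‖ ^ 2 := by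
    intro a b
    simp only [h, h', inner_sub_left, real_inner_smul_left, inner_sub_right,
      real_inner_self_eq_norm_sq, norm_sub_sq_real, real_inner_comm a b]
    ring
  have hlower : ∀ a b, h a + ⟪h' a, b - a⟫_ℝ ≤ h b := fun a b => by
    linarith [hbregman a b, hsc a b]
  have hupper : ∀ a b, h b ≤ h a + ⟪h' a, b - a⟫_ℝ + (L - μ) / 2 * ‖b - a‖ ^ 2 := fun a b => by
    linarith [hbregman a b, le_add_inner_add_of_lipschitz_gradient hf hlip a b]
  have hcoco := norm_sub_sq_le_mul_inner_of_convex (sub_nonneg.2 hμL) hlower hupper x y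
  have hsplit : (x - α • f' x) - (y - α • f' y) = (1 - α * μ) • (x - y) - α • (h' x - h' y) := by
    simp only [h']
    module
  rw [hsplit]
  have := norm_smul_sub_smul_le_of_norm_sq_le_mul_inner (c := 1 - α * μ) (sub_nonneg.2 hμL) hα hcoco
  rwa [show 1 - α * μ - α * (L - μ) = 1 - α * L by ring] at this

theorem EReal.convexOn_toReal {V : Type*} [AddCommGroup V] [Module ℝ V] {g : V → EReal}
    (hbot : ∀ x, g x ≠ ⊥)
    (hconv : ∀ x y : V, ∀ t : ℝ, 0 ≤ t → t ≤ 1 →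
      g (t • x + (1 - t) • y) ≤ (t : EReal) * g x + ((1 - t : ℝ) : EReal) * g y) :
    ConvexOn ℝ {x | g x ≠ ⊤} (fun x => (g x).toReal) := by
  have hcomb : ∀ x, g x ≠ ⊤ → ∀ y, g y ≠ ⊤ → ∀ a b : ℝ, 0 ≤ a → 0 ≤ b → a + b = 1 →
      g (a • x + b • y) ≤ ((a * (g x).toReal + b * (g y).toReal : ℝ) : EReal) := by
    intro x hx y hy a b ha hb hab
    obtain rfl : b = 1 - a := by linarith
    rw [EReal.coe_add, EReal.coe_mul, EReal.coe_mul, EReal.coe_toReal hx (hbot x),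
      EReal.coe_toReal hy (hbot y)]
    exact hconv x y a ha (by linarith)
  have hdom : Convex ℝ {x | g x ≠ ⊤} := fun x hx y hy a b ha hb hab =>
    ne_top_of_le_ne_top (EReal.coe_ne_top _) (hcomb x hx y hy a b ha hb hab)
  refine ⟨hdom, fun x hx y hy a b ha hb hab => ?_⟩
  have hle := hcomb x hx y hy a b ha hb hab
  rwa [← EReal.coe_toReal (hdom hx hy ha hb hab) (hbot _), EReal.coe_le_coe_iff] at hle

theorem EReal.isMinOn_add_mul_toReal {X : Type*} {φ : X → ℝ} {g : X → EReal} {c : ℝ} {a : X}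
    (hc : 0 < c) (hbot : ∀ y, g y ≠ ⊥) (hproper : ∃ y, g y ≠ ⊤)
    (hmin : ∀ y, (φ a : EReal) + c * g a ≤ (φ y : EReal) + c * g y) :
    g a ≠ ⊤ ∧ IsMinOn (fun y => φ y + c * (g y).toReal) {y | g y ≠ ⊤} a := by
  have hcoe : ∀ y, g y ≠ ⊤ → (φ y : EReal) + c * g y = ((φ y + c * (g y).toReal : ℝ) : EReal) :=
    fun y hy => by rw [EReal.coe_add, EReal.coe_mul, EReal.coe_toReal hy (hbot y)]
  have ha : g a ≠ ⊤ := by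
    obtain ⟨y, hy⟩ := hproper
    intro htop
    have := hmin y
    rw [htop, EReal.mul_top_of_pos (by exact_mod_cast hc),
      EReal.add_top_of_ne_bot (EReal.coe_ne_bot _), top_le_iff, hcoe y hy] at this
    exact EReal.coe_ne_top _ this
  refine ⟨ha, isMinOn_iff.2 fun y hy => ?_⟩
  have := hmin y
  rwa [hcoe a ha, hcoe y hy, EReal.coe_le_coe_iff] at this

theorem stmt_6_general {n : ℕ} (μ L : ℝ) (hμL : μ ≤ L)
    (f : EuclideanSpace ℝ (Fin n) → ℝ)
    (f' : EuclideanSpace ℝ (Fin n) → EuclideanSpace ℝ (Fin n))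
    (hdiff : ∀ x, HasGradientAt f (f' x) x)
    (hsc : ∀ x y, f y ≥ f x + ⟪f' x, y - x⟫_ℝ + μ / 2 * ‖y - x‖ ^ 2)
    (hlip : ∀ x y, ‖f' x - f' y‖ ≤ L * ‖x - y‖)
    (g : EuclideanSpace ℝ (Fin n) → EReal)
    (hproper : ∃ x, g x ≠ ⊤) (hnotbot : ∀ x, g x ≠ ⊥)
    (hconv : ∀ x y : EuclideanSpace ℝ (Fin n), ∀ t : ℝ, 0 ≤ t → t ≤ 1 →
      g (t • x + (1 - t) • y) ≤ (t : EReal) * g x + ((1 - t : ℝ) : EReal) * g y)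
    (xstar : EuclideanSpace ℝ (Fin n))
    (hmin : ∀ y, (f xstar : EReal) + g xstar ≤ (f y : EReal) + g y)
    (α : ℝ) (hα : 0 < α)
    (x : ℕ → EuclideanSpace ℝ (Fin n))
    (hstep : ∀ k, ∀ y,
      ((1/2 * ‖x (k+1) - (x k - α • f' (x k))‖^2 : ℝ) : EReal) + (α : EReal) * g (x (k+1)) ≤
      ((1/2 * ‖y - (x k - α • f' (x k))‖^2 : ℝ) : EReal) + (α : EReal) * g y) :
    ∀ k : ℕ, 1 ≤ k →
      ‖x k - xstar‖ ≤ (max |1 - α * L| |1 - α * μ|) ^ k * ‖x 0 - xstar‖ := by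
  have hG := EReal.convexOn_toReal hnotbot hconv
  obtain ⟨hxstar, hxstar_min⟩ := EReal.isMinOn_add_mul_toReal (c := 1) one_pos hnotbot hproper
    (by simpa using hmin)
  have hfix := isMinOn_prox_of_isMinOn_add hG
    (le_add_inner_add_of_lipschitz_gradient hdiff hlip xstar) (by simpa using hxstar_min) hxstar
    hα.le
  have hcontract (k : ℕ) : ‖x (k + 1) - xstar‖ ≤ max |1 - α * L| |1 - α * μ| * ‖x k - xstar‖ := by
    obtain ⟨hxk, hxk_min⟩ := EReal.isMinOn_add_mul_toReal
      (φ := fun y => 1 / 2 * ‖y - (x k - α • f' (x k))‖ ^ 2) hα hnotbot hproper (hstep k)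
    exact (norm_sub_le_of_isMinOn_prox (hG.smul hα.le) hxk_min hxk hfix hxstar).trans
      (norm_sub_smul_sub_sub_smul_le hμL hα.le hdiff hsc hlip _ _)
  intro k _
  exact le_geom (u := fun k => ‖x k - xstar‖) (le_max_of_le_right (abs_nonneg _)) k
    fun j _ => hcontract j

/-- Linear convergence of the proximal gradient method with constant step size `α > 0`:
`‖x^k - x*‖ ≤ Q(α)^k ‖x⁰ - x*‖` with `Q(α) = max {|1 - αL|, |1 - αμ|}`. -/
theorem stmt_6 {n : ℕ} (μ L : ℝ) (hμ : 0 < μ) (hμL : μ ≤ L)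
    (f : EuclideanSpace ℝ (Fin n) → ℝ)
    (f' : EuclideanSpace ℝ (Fin n) → EuclideanSpace ℝ (Fin n))
    (hdiff : ∀ x, HasGradientAt f (f' x) x)
    (hsc : ∀ x y, f y ≥ f x + ⟪f' x, y - x⟫_ℝ + μ / 2 * ‖y - x‖ ^ 2)
    (hlip : ∀ x y, ‖f' x - f' y‖ ≤ L * ‖x - y‖)
    (g : EuclideanSpace ℝ (Fin n) → EReal)
    (hproper : ∃ x, g x ≠ ⊤) (hnotbot : ∀ x, g x ≠ ⊥)
    (hconv : ∀ x y : EuclideanSpace ℝ (Fin n), ∀ t : ℝ, 0 ≤ t → t ≤ 1 →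
      g (t • x + (1 - t) • y) ≤ (t : EReal) * g x + ((1 - t : ℝ) : EReal) * g y)
    (hlsc : LowerSemicontinuous g)
    (xstar : EuclideanSpace ℝ (Fin n))
    (hmin : ∀ y, (f xstar : EReal) + g xstar ≤ (f y : EReal) + g y)
    (α : ℝ) (hα : 0 < α)
    (x : ℕ → EuclideanSpace ℝ (Fin n))
    (hstep : ∀ k, ∀ y,
      ((1/2 * ‖x (k+1) - (x k - α • f' (x k))‖^2 : ℝ) : EReal) + (α : EReal) * g (x (k+1)) ≤
      ((1/2 * ‖y - (x k - α • f' (x k))‖^2 : ℝ) : EReal) + (α : EReal) * g y) :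
    ∀ k : ℕ, 1 ≤ k →
      ‖x k - xstar‖ ≤ (max |1 - α * L| |1 - α * μ|) ^ k * ‖x 0 - xstar‖ :=
  stmt_6_general μ L hμL f f' hdiff hsc hlip g hproper hnotbot hconv xstar hmin α hα x hstep
end

section
/- (Finite active-set identification, step-size 1/L.) Under the nondegeneracy assumption, if ‖x^k − x*‖ ≤ δ/(2L), then the proximal gradient step with step-size 1/L sets x_i^{k+1} = x_i* for every coordinate i in the active-set Z = {i : ∂g_i(x_i*) is not a singleton}, where δ = min_{i∈Z} min{−∇_i f(x*) − l_i, u_i + ∇_i f(x*)} > 0 and (l_i, u_i) is the interior of ∂g_i(x_i*). -/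
/-!
For `i ∈ Z` the margin `δ` puts the open interval of radius `δ` around `-∇ᵢf(x*)` inside
`int ∂gᵢ(xᵢ*)`; as `∂gᵢ(xᵢ*)` is closed, the closed interval lies in `∂gᵢ(xᵢ*)` as well. By the
Lipschitz bound, `‖xᵏ - x*‖ ≤ δ/(2L)` places `v = L(xᵢᵏ - xᵢ*) - ∇ᵢf(xᵏ)` in that closed interval.
But `v ∈ ∂gᵢ(xᵢ*)` is the optimality condition of the proximal subproblem at `xᵢ*`, whose objective
is strongly convex, so its minimizer `xᵢᵏ⁺¹` is `xᵢ*`.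
-/

open InnerProductSpace

/-- The convex subdifferential of `g : ℝ → ℝ ∪ {∞}` at `y`. -/
def subdiff (g : ℝ → EReal) (y : ℝ) : Set ℝ :=
  {v : ℝ | ∀ z : ℝ, g y + ((v * (z - y) : ℝ) : EReal) ≤ g z}

open Set

lemma isClosed_subdiff (g : ℝ → EReal) (y : ℝ) : IsClosed (subdiff g y) := by
  simp only [subdiff, ofPred_forall]
  refine isClosed_iInter fun z => isClosed_le ?_ continuous_const
  refine continuous_iff_continuousAt.2 fun v => ?_
  exact (EReal.continuousAt_add (Or.inr (EReal.coe_ne_bot _)) (Or.inr (EReal.coe_ne_top _))).comp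
    (continuous_const.prodMk (continuous_coe_real_ereal.comp (by fun_prop))).continuousAt

lemma Icc_subset_subdiff_of_Ioo_subset_interior {g : ℝ → EReal} {y a b : ℝ} (hab : a < b)
    (h : Ioo a b ⊆ interior (subdiff g y)) : Icc a b ⊆ subdiff g y := by
  rw [← closure_Ioo hab.ne]
  exact closure_minimal (h.trans interior_subset) (isClosed_subdiff g y)

lemma ne_top_of_mem_subdiff {g : ℝ → EReal} {y v z : ℝ} (hv : v ∈ subdiff g y) (hz : g z ≠ ⊤) :
    g y ≠ ⊤ := by
  intro hy
  have := hv z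
  rw [hy, EReal.top_add_coe, top_le_iff] at this
  exact hz this

lemma EReal.le_coe_sub_of_le_coe_sub {l : EReal} {x δ : ℝ} (h : (δ : EReal) ≤ x - l) :
    l ≤ ((x - δ : ℝ) : EReal) := by
  induction l using EReal.rec with
  | bot => exact bot_le
  | top => simp at h
  | coe l => norm_cast at h ⊢; linarith

lemma EReal.coe_add_le_of_le_add_coe {u : EReal} {x δ : ℝ} (h : (δ : EReal) ≤ u + x) :
    ((δ - x : ℝ) : EReal) ≤ u := by
  induction u using EReal.rec with
  | bot => simp at h
  | top => exact le_top
  | coe u => norm_cast at h ⊢; linarith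

lemma abs_apply_smul_sub_sub_le {ι : Type*} [Fintype ι]
    {F : EuclideanSpace ℝ ι → EuclideanSpace ℝ ι} {L δ : ℝ} (hL : 0 < L)
    (hF : ∀ x y, ‖F x - F y‖ ≤ L * ‖x - y‖) {x y : EuclideanSpace ℝ ι}
    (hxy : ‖x - y‖ ≤ δ / (2 * L)) (i : ι) :
    |L * (x i - y i) - (F x i - F y i)| ≤ δ := by
  calc |L * (x i - y i) - (F x i - F y i)| = ‖(L • (x - y) - (F x - F y)) i‖ := by simp
    _ ≤ ‖L • (x - y) - (F x - F y)‖ := PiLp.norm_apply_le _ i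
    _ ≤ L * ‖x - y‖ + L * ‖x - y‖ := by
        grw [norm_sub_le, norm_smul, Real.norm_of_nonneg hL.le, hF]
    _ ≤ δ := by
        have := mul_le_mul_of_nonneg_left hxy hL.le
        rw [show L * (δ / (2 * L)) = δ / 2 by field_simp] at this
        linarith

lemma eq_of_mem_subdiff_of_prox_le {g : ℝ → EReal} {L c y₀ y : ℝ} (hL : 0 < L)
    (hy₀ : g y₀ ≠ ⊤) (hy₀' : g y₀ ≠ ⊥) (hsub : L * (c - y₀) ∈ subdiff g y₀)
    (hprox : ((1/2 * (y - c)^2 : ℝ) : EReal) + ((1/L : ℝ) : EReal) * g y ≤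
      ((1/2 * (y₀ - c)^2 : ℝ) : EReal) + ((1/L : ℝ) : EReal) * g y₀) :
    y = y₀ := by
  lift g y₀ to ℝ using ⟨hy₀, hy₀'⟩ with G hG
  have hsub_y := hsub y
  rw [← hG] at hsub_y
  have hy_bot : g y ≠ ⊥ := ne_bot_of_le_ne_bot (by rw [← EReal.coe_add]; exact EReal.coe_ne_bot _) hsub_y
  have hy_top : g y ≠ ⊤ := by
    intro h
    rw [h, EReal.mul_top_of_pos (by exact_mod_cast one_div_pos.mpr hL)] at hprox
    simp [← EReal.coe_mul, ← EReal.coe_add] at hprox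
  lift g y to ℝ using ⟨hy_top, hy_bot⟩ with G' hG'
  norm_cast at hsub_y hprox
  have : L * (1/2 * (y - c)^2 + 1/L * G') ≤ L * (1/2 * (y₀ - c)^2 + 1/L * G) :=
    mul_le_mul_of_nonneg_left hprox hL.le
  field_simp at this
  have key : L * (y - y₀) ^ 2 ≤ 0 := by linear_combination this + 2 * hsub_y
  have hsq : (y - y₀) ^ 2 ≤ 0 := nonpos_of_mul_nonpos_right key hL
  exact sub_eq_zero.mp (pow_eq_zero_iff two_ne_zero |>.mp (le_antisymm hsq (sq_nonneg _)))

theorem stmt_11_general {n : ℕ} (μ L : ℝ) (hμ : 0 < μ) (hμL : μ ≤ L)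
    (f' : EuclideanSpace ℝ (Fin n) → EuclideanSpace ℝ (Fin n))
    (hlip : ∀ x y, ‖f' x - f' y‖ ≤ L * ‖x - y‖)
    (g : Fin n → ℝ → EReal)
    (hproper : ∀ i, ∃ t, g i t ≠ ⊤) (hnotbot : ∀ i t, g i t ≠ ⊥)
    (xstar : EuclideanSpace ℝ (Fin n))
    (Z : Set (Fin n))
    (l u : Fin n → EReal)
    (hlu : ∀ i ∈ Z, interior (subdiff (g i) (xstar i)) =
      {v : ℝ | l i < (v : EReal) ∧ (v : EReal) < u i})
    (δ : ℝ) (hδpos : 0 < δ)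
    (hδ : ∀ i ∈ Z, (δ : EReal) ≤ ((-(f' xstar i) : ℝ) : EReal) - l i ∧
      (δ : EReal) ≤ u i + ((f' xstar i : ℝ) : EReal))
    (xk xnext : EuclideanSpace ℝ (Fin n))
    (hk : ‖xk - xstar‖ ≤ δ / (2 * L))
    (hstep : ∀ i, ∀ z : ℝ,
      ((1/2 * (xnext i - (xk i - (1/L) * f' xk i))^2 : ℝ) : EReal)
          + ((1/L : ℝ) : EReal) * g i (xnext i) ≤
      ((1/2 * (z - (xk i - (1/L) * f' xk i))^2 : ℝ) : EReal)
          + ((1/L : ℝ) : EReal) * g i z) :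
    ∀ i ∈ Z, xnext i = xstar i := by
  intro i hi
  have hL : 0 < L := hμ.trans_le hμL
  set m := -(f' xstar i)
  have hball : Icc (m - δ) (m + δ) ⊆ subdiff (g i) (xstar i) := by
    refine Icc_subset_subdiff_of_Ioo_subset_interior (by linarith) fun v hv => ?_
    rw [hlu i hi]
    exact ⟨(EReal.le_coe_sub_of_le_coe_sub (hδ i hi).1).trans_lt (EReal.coe_lt_coe_iff.2 hv.1),
      (EReal.coe_lt_coe_iff.2 (by linarith [hv.2])).trans_le
        (EReal.coe_add_le_of_le_add_coe (hδ i hi).2)⟩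
  have hv : L * ((xk i - 1 / L * f' xk i) - xstar i) ∈ subdiff (g i) (xstar i) := by
    have := abs_apply_smul_sub_sub_le hL hlip hk i
    refine hball (mem_Icc.2 ⟨?_, ?_⟩) <;>
      · field_simp
        linarith [abs_le.1 this]
  obtain ⟨t, ht⟩ := hproper i
  exact eq_of_mem_subdiff_of_prox_le hL (ne_top_of_mem_subdiff hv ht) (hnotbot i _) hv
    (hstep i (xstar i))

/-- Finite active-set identification for the proximal gradient step with step size `1/L`:
if `‖x^k - x*‖ ≤ δ/(2L)` then the next iterate agrees with `x*` on the active set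
`Z = {i : ∂gᵢ(xᵢ*) is not a singleton}`, where
`δ = min_{i ∈ Z} min {-∇ᵢf(x*) - lᵢ, uᵢ + ∇ᵢf(x*)} > 0` and
`(lᵢ, uᵢ) = int ∂gᵢ(xᵢ*)` (nondegeneracy: `-∇ᵢf(x*) ∈ int ∂gᵢ(xᵢ*)` for `i ∈ Z`). -/
theorem stmt_11 {n : ℕ} (μ L : ℝ) (hμ : 0 < μ) (hμL : μ ≤ L)
    (f : EuclideanSpace ℝ (Fin n) → ℝ)
    (f' : EuclideanSpace ℝ (Fin n) → EuclideanSpace ℝ (Fin n))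
    (hdiff : ∀ x, HasGradientAt f (f' x) x)
    (hsc : ∀ x y, f y ≥ f x + ⟪f' x, y - x⟫_ℝ + μ / 2 * ‖y - x‖ ^ 2)
    (hlip : ∀ x y, ‖f' x - f' y‖ ≤ L * ‖x - y‖)
    (g : Fin n → ℝ → EReal)
    (hproper : ∀ i, ∃ t, g i t ≠ ⊤) (hnotbot : ∀ i t, g i t ≠ ⊥)
    (hconv : ∀ i, ∀ a b t : ℝ, 0 ≤ t → t ≤ 1 →
      g i (t * a + (1 - t) * b) ≤ (t : EReal) * g i a + ((1 - t : ℝ) : EReal) * g i b)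
    (hlsc : ∀ i, LowerSemicontinuous (g i))
    (xstar : EuclideanSpace ℝ (Fin n))
    (hmin : ∀ y, (f xstar : EReal) + ∑ i, g i (xstar i) ≤ (f y : EReal) + ∑ i, g i (y i))
    (Z : Set (Fin n)) (hZ : Z = {i | ¬ (subdiff (g i) (xstar i)).Subsingleton})
    (l u : Fin n → EReal)
    (hlu : ∀ i ∈ Z, interior (subdiff (g i) (xstar i)) =
      {v : ℝ | l i < (v : EReal) ∧ (v : EReal) < u i})
    (hnondegen₁ : ∀ i ∈ Z, (-(f' xstar i)) ∈ interior (subdiff (g i) (xstar i)))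
    (hnondegen₂ : ∀ i ∉ Z, (-(f' xstar i)) ∈ subdiff (g i) (xstar i))
    (δ : ℝ) (hδpos : 0 < δ)
    (hδ : ∀ i ∈ Z, (δ : EReal) ≤ ((-(f' xstar i) : ℝ) : EReal) - l i ∧
      (δ : EReal) ≤ u i + ((f' xstar i : ℝ) : EReal))
    (xk xnext : EuclideanSpace ℝ (Fin n))
    (hk : ‖xk - xstar‖ ≤ δ / (2 * L))
    (hstep : ∀ i, ∀ z : ℝ,
      ((1/2 * (xnext i - (xk i - (1/L) * f' xk i))^2 : ℝ) : EReal)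
          + ((1/L : ℝ) : EReal) * g i (xnext i) ≤
      ((1/2 * (z - (xk i - (1/L) * f' xk i))^2 : ℝ) : EReal)
          + ((1/L : ℝ) : EReal) * g i z) :
    ∀ i ∈ Z, xnext i = xstar i :=
  stmt_11_general μ L hμ hμL f' hlip g hproper hnotbot xstar Z l u hlu δ hδpos hδ xk xnext hk hstep
end
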